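/- In StraTT, the restricted floating lemma holds: if Δ; Γ ⊢ a :^j A and j ≤ k, then Δ; ↑_j^k(⌈Γ⌉^j) ⊢ a :^k A, where ⌈Γ⌉^j removes assumptions of level greater than j and ↑_j^k raises all assumptions at level exactly j to level k without changing their types. -/
import Mathlib


/-! Syntax of StraTT: a single universe ⋆, variables, displaced constants,
stratified dependent function types `Πx:^j A. B`, floating nondependent
function types `A → B`, abstractions, applications, the empty type and its
eliminator. Levels are natural numbers. -/

inductive Tm : Type
  | star
  | var (x : ℕ)
  | const (x : ℕ) (i : ℕ)
  | pi (j : ℕ) (x : ℕ) (A B : Tm)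
  | arrow (A B : Tm)
  | lam (x : ℕ) (b : Tm)
  | app (b a : Tm)
  | bot
  | absurd (b : Tm)
  deriving DecidableEq

namespace Tm

/-- Substitution `a{u/x}` of the term `u` for the variable `x`. -/
def subst (x : ℕ) (u : Tm) : Tm → Tm
  | star => star
  | var y => if y = x then u else var y
  | const y i => const y i
  | pi j y A B => pi j y (subst x u A) (if y = x then B else subst x u B)
  | arrow A B => arrow (subst x u A) (subst x u B)
  | lam y b => lam y (if y = x then b else subst x u b)
  | app b a => app (subst x u b) (subst x u a)
  | bot => bot
  | absurd b => absurd (subst x u b)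

/-- Displacement `a^{+i}`: uniformly increment every level annotation by `i`. -/
def incr (i : ℕ) : Tm → Tm
  | star => star
  | var y => var y
  | const y j => const y (i + j)
  | pi j y A B => pi (i + j) y (incr i A) (incr i B)
  | arrow A B => arrow (incr i A) (incr i B)
  | lam y b => lam y (incr i b)
  | app b a => app (incr i b) (incr i a)
  | bot => bot
  | absurd b => absurd (incr i b)

end Tm

/-- A signature entry `x :^k A := a` (name, level, type, definition). -/
abbrev Sig := List (ℕ × ℕ × Tm × Tm)
/-- A context entry `x :^k A` (name, level, type); head is the most recent. -/
abbrev Ctx := List (ℕ × ℕ × Tm)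

def lookupSig : Sig → ℕ → Option (ℕ × Tm × Tm)
  | [], _ => none
  | (y, k, A, a) :: Δ, x => if x = y then some (k, A, a) else lookupSig Δ x

def lookupCtx : Ctx → ℕ → Option (ℕ × Tm)
  | [], _ => none
  | (y, k, A) :: Γ, x => if x = y then some (k, A) else lookupCtx Γ x

/-- Untyped definitional equality `Δ ⊢ a ≡ b`. -/
inductive DEq (Δ : Sig) : Tm → Tm → Prop
  | refl (a) : DEq Δ a a
  | sym : DEq Δ a b → DEq Δ b a
  | trans : DEq Δ a b → DEq Δ b c → DEq Δ a c
  | beta (x b a) : DEq Δ (.app (.lam x b) a) (Tm.subst x a b)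
  | delta {x i k A a} : lookupSig Δ x = some (k, A, a) → DEq Δ (.const x i) (Tm.incr i a)
  | pi {j x A A' B B'} : DEq Δ A A' → DEq Δ B B' → DEq Δ (.pi j x A B) (.pi j x A' B')
  | arrow {A A' B B'} : DEq Δ A A' → DEq Δ B B' → DEq Δ (.arrow A B) (.arrow A' B')
  | lam {x b b'} : DEq Δ b b' → DEq Δ (.lam x b) (.lam x b')
  | app {b b' a a'} : DEq Δ b b' → DEq Δ a a' → DEq Δ (.app b a) (.app b' a')
  | absurd {b b'} : DEq Δ b b' → DEq Δ (.absurd b) (.absurd b')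

mutual
  /-- Well-formed signatures `⊢ Δ`. -/
  inductive SigWf : Sig → Prop
    | nil : SigWf []
    | cons {Δ x k A a} : SigWf Δ → lookupSig Δ x = none →
        Typing Δ [] a k A → SigWf ((x, k, A, a) :: Δ)

  /-- Well-formed contexts `Δ ⊢ Γ`. -/
  inductive CtxWf : Sig → Ctx → Prop
    | nil {Δ} : SigWf Δ → CtxWf Δ []
    | cons {Δ Γ x k A} : CtxWf Δ Γ → lookupCtx Γ x = none →
        Typing Δ Γ A k .star → CtxWf Δ ((x, k, A) :: Γ)

  /-- Level-annotated typing `Δ; Γ ⊢ a :^k A` of full StraTT. -/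
  inductive Typing : Sig → Ctx → Tm → ℕ → Tm → Prop
    | star {Δ Γ k} : CtxWf Δ Γ → Typing Δ Γ .star k .star
    | var {Δ Γ x j k A} : CtxWf Δ Γ → lookupCtx Γ x = some (j, A) → j ≤ k →
        Typing Δ Γ (.var x) k A
    | const {Δ Γ x i j k A a} : CtxWf Δ Γ → lookupSig Δ x = some (j, A, a) →
        i + j ≤ k → Typing Δ Γ (.const x i) k (Tm.incr i A)
    | pi {Δ Γ j k x A B} : j < k → Typing Δ Γ A j .star →
        Typing Δ ((x, j, A) :: Γ) B k .star → Typing Δ Γ (.pi j x A B) k .star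
    | lamPi {Δ Γ j k x A B b} : j < k → Typing Δ Γ A j .star →
        Typing Δ ((x, j, A) :: Γ) b k B → Typing Δ Γ (.lam x b) k (.pi j x A B)
    | appPi {Δ Γ j k x A B b a} : Typing Δ Γ b k (.pi j x A B) → Typing Δ Γ a j A →
        Typing Δ Γ (.app b a) k (Tm.subst x a B)
    | arrow {Δ Γ k A B} : Typing Δ Γ A k .star → Typing Δ Γ B k .star →
        Typing Δ Γ (.arrow A B) k .star
    | lamArrow {Δ Γ k x A B b} : Typing Δ Γ A k .star → Typing Δ Γ B k .star →
        Typing Δ ((x, k, A) :: Γ) b k B → Typing Δ Γ (.lam x b) k (.arrow A B)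
    | appArrow {Δ Γ k A B b a} : Typing Δ Γ b k (.arrow A B) → Typing Δ Γ a k A →
        Typing Δ Γ (.app b a) k B
    | bot {Δ Γ k} : CtxWf Δ Γ → Typing Δ Γ .bot k .star
    | absurd {Δ Γ k b A} : Typing Δ Γ b k .bot → Typing Δ Γ A k .star →
        Typing Δ Γ (.absurd b) k A
    | conv {Δ Γ k a A B} : Typing Δ Γ a k A → DEq Δ A B →
        Typing Δ Γ B k .star → Typing Δ Γ a k B
end

/-- Restriction `⌈Γ⌉^j`: remove all assumptions whose level is strictly
greater than `j`. -/
def restrict (j : ℕ) (Γ : Ctx) : Ctx :=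
  Γ.filter (fun e => e.2.1 ≤ j)

/-- Floating `↑_j^k Γ`: raise every assumption at level exactly `j` to level
`k`, leaving its type and all other assumptions unchanged. -/
def float (j k : ℕ) (Γ : Ctx) : Ctx :=
  Γ.map (fun e => if e.2.1 = j then (e.1, k, e.2.2) else e)

/-- Spine invariant: every pi annotation along the codomain spine is `< m`. -/
def sp (m : ℕ) : Tm → Prop
  | .pi l _ _ B => l < m ∧ sp m B
  | .arrow _ B => sp m B
  | _ => True

lemma sp_mono {m n : ℕ} (h : m ≤ n) : ∀ {A : Tm}, sp m A → sp n A := by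
  intro A
  induction A with
  | pi l x C D ihC ihD =>
      intro hs
      exact ⟨lt_of_lt_of_le hs.1 h, ihD hs.2⟩
  | arrow C D ihC ihD => exact fun hs => ihD hs
  | _ => intro _; simp [sp]

lemma sp_incr {i : ℕ} : ∀ {A : Tm} {l : ℕ}, sp l A → sp (i + l) (Tm.incr i A) := by
  intro A
  induction A with
  | pi l' x C D ihC ihD =>
      intro l hs
      simp only [Tm.incr, sp]
      exact ⟨Nat.add_lt_add_left hs.1 i, ihD hs.2⟩
  | arrow C D ihC ihD =>
      intro l hs
      simp only [Tm.incr, sp]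
      exact ihD hs
  | _ => intro l _; simp [sp, Tm.incr]

lemma sp_subst {x : ℕ} {a : Tm} {m : ℕ} (ha : sp m a) :
    ∀ {B : Tm}, sp m B → sp m (Tm.subst x a B) := by
  intro B
  induction B with
  | var y =>
      intro _
      simp only [Tm.subst]
      split
      · exact ha
      · simp [sp]
  | pi l y C D ihC ihD =>
      intro hs
      simp only [Tm.subst, sp]
      refine ⟨hs.1, ?_⟩
      split
      · exact hs.2
      · exact ihD hs.2
  | arrow C D ihC ihD =>
      intro hs
      simp only [Tm.subst, sp]
      exact ihD hs
  | _ => intro _; simp [sp, Tm.subst]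

lemma restrict_nil (j : ℕ) : restrict j [] = [] := rfl
lemma float_nil (j k : ℕ) : float j k [] = [] := rfl

lemma fr_cons_le {j l : ℕ} (h : l ≤ j) (k x : ℕ) (A : Tm) (Γ : Ctx) :
    float j k (restrict j ((x, l, A) :: Γ)) =
      (x, if l = j then k else l, A) :: float j k (restrict j Γ) := by
  simp only [restrict, float, List.filter_cons, List.map_cons]
  simp [h]
  split <;> simp

lemma fr_cons_lt {j l : ℕ} (h : l < j) (k x : ℕ) (A : Tm) (Γ : Ctx) :
    float j k (restrict j ((x, l, A) :: Γ)) =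
      (x, l, A) :: float j k (restrict j Γ) := by
  rw [fr_cons_le (le_of_lt h), if_neg (Nat.ne_of_lt h)]

lemma fr_cons_gt {j l : ℕ} (h : j < l) (k x : ℕ) (A : Tm) (Γ : Ctx) :
    float j k (restrict j ((x, l, A) :: Γ)) = float j k (restrict j Γ) := by
  simp only [restrict, float, List.filter_cons]
  simp [Nat.not_le.mpr h]

lemma lookup_fr_some {j k l x : ℕ} {A : Tm} (hl : l ≤ j) :
    ∀ {Γ : Ctx}, lookupCtx Γ x = some (l, A) →
      lookupCtx (float j k (restrict j Γ)) x = some ((if l = j then k else l), A) := by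
  intro Γ
  induction Γ with
  | nil => intro h; simp [lookupCtx] at h
  | cons e Γ ih =>
      obtain ⟨y, l₀, T⟩ := e
      intro h
      by_cases hxy : x = y
      · subst hxy
        simp only [lookupCtx, if_pos rfl, Option.some.injEq, Prod.mk.injEq] at h
        obtain ⟨rfl, rfl⟩ := h
        rw [fr_cons_le hl]
        simp [lookupCtx]
      · simp only [lookupCtx, if_neg hxy] at h
        rcases le_or_gt l₀ j with hc | hc
        · rw [fr_cons_le hc]
          simp only [lookupCtx, if_neg hxy]
          exact ih h
        · rw [fr_cons_gt hc]
          exact ih h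

lemma lookup_fr_none {j k x : ℕ} :
    ∀ {Γ : Ctx}, lookupCtx Γ x = none →
      lookupCtx (float j k (restrict j Γ)) x = none := by
  intro Γ
  induction Γ with
  | nil => intro _; rfl
  | cons e Γ ih =>
      obtain ⟨y, l₀, T⟩ := e
      intro h
      by_cases hxy : x = y
      · subst hxy; simp [lookupCtx] at h
      · simp only [lookupCtx, if_neg hxy] at h
        rcases le_or_gt l₀ j with hc | hc
        · rw [fr_cons_le hc]
          simp only [lookupCtx, if_neg hxy]
          exact ih h
        · rw [fr_cons_gt hc]
          exact ih h

theorem float_main {Δ : Sig} {Γ : Ctx} {t : Tm} {m : ℕ} {A : Tm} (h : Typing Δ Γ t m A) :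
    (∀ j k, m ≤ j → j ≤ k → Typing Δ (float j k (restrict j Γ)) t (if m = j then k else m) A)
    ∧ sp m t ∧ sp m A := by
  refine Typing.rec
    (motive_1 := fun Δ _ => ∀ x l A a, lookupSig Δ x = some (l, A, a) → sp l A)
    (motive_2 := fun Δ Γ _ =>
      (∀ j k, j ≤ k → CtxWf Δ (float j k (restrict j Γ)))
      ∧ (∀ x l A, lookupCtx Γ x = some (l, A) → sp l A)
      ∧ (∀ x l A a, lookupSig Δ x = some (l, A, a) → sp l A))
    (motive_3 := fun Δ Γ t m A _ =>
      (∀ j k, m ≤ j → j ≤ k → Typing Δ (float j k (restrict j Γ)) t (if m = j then k else m) A)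
      ∧ sp m t ∧ sp m A)
    ?_ ?_ ?_ ?_ ?_ ?_ ?_ ?_ ?_ ?_ ?_ ?_ ?_ ?_ ?_ ?_ h
  -- SigWf.nil
  · intro x l A a h
    simp [lookupSig] at h
  -- SigWf.cons
  · intro Δ x k A a _ _ _ ihΔ ihT y l A' a' hlook
    by_cases hxy : y = x
    · subst hxy
      simp only [lookupSig, if_pos rfl, Option.some.injEq, Prod.mk.injEq] at hlook
      obtain ⟨rfl, rfl, rfl⟩ := hlook
      exact ihT.2.2
    · simp only [lookupSig, if_neg hxy] at hlook
      exact ihΔ y l A' a' hlook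
  -- CtxWf.nil
  · intro Δ hΔ ihΔ
    refine ⟨fun j k _ => ?_, fun x l A h => by simp [lookupCtx] at h, ihΔ⟩
    rw [restrict_nil, float_nil]
    exact CtxWf.nil hΔ
  -- CtxWf.cons
  · intro Δ Γ x k₀ A _ hnone _ ihΓ ihT
    refine ⟨?_, ?_, ihΓ.2.2⟩
    · intro j k hjk
      rcases le_or_gt k₀ j with hc | hc
      · rw [fr_cons_le hc]
        exact CtxWf.cons (ihΓ.1 j k hjk) (lookup_fr_none hnone) (ihT.1 j k hc hjk)
      · rw [fr_cons_gt hc]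
        exact ihΓ.1 j k hjk
    · intro y l B hlook
      by_cases hxy : y = x
      · subst hxy
        simp only [lookupCtx, if_pos rfl, Option.some.injEq, Prod.mk.injEq] at hlook
        obtain ⟨rfl, rfl⟩ := hlook
        exact ihT.2.1
      · simp only [lookupCtx, if_neg hxy] at hlook
        exact ihΓ.2.1 y l B hlook
  -- star
  · intro Δ Γ m _ ihΓ
    exact ⟨fun j k hmj hjk => Typing.star (ihΓ.1 j k hjk), by simp [sp], by simp [sp]⟩
  -- var
  · intro Δ Γ x l m A _ hlook hlm ihΓ
    refine ⟨?_, by simp [sp], sp_mono hlm (ihΓ.2.1 x l A hlook)⟩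
    intro j k hmj hjk
    refine Typing.var (ihΓ.1 j k hjk) (lookup_fr_some (le_trans hlm hmj) hlook) ?_
    split_ifs <;> omega
  -- const
  · intro Δ Γ x i l m A a _ hsig hle ihΓ
    refine ⟨?_, by simp [sp], ?_⟩
    · intro j k hmj hjk
      refine Typing.const (ihΓ.1 j k hjk) hsig ?_
      split_ifs <;> omega
    · exact sp_mono hle (sp_incr (ihΓ.2.2 x l A a hsig))
  -- pi
  · intro Δ Γ l m x A B hlm _ _ ihA ihB
    refine ⟨?_, ?_, by simp [sp]⟩
    · intro j k hmj hjk
      have hlj : l < j := lt_of_lt_of_le hlm hmj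
      refine Typing.pi ?_ ?_ ?_
      · split <;> omega
      · have h := ihA.1 j k (le_of_lt hlj) hjk
        rwa [if_neg (Nat.ne_of_lt hlj)] at h
      · have h := ihB.1 j k hmj hjk
        rwa [fr_cons_lt hlj] at h
    · exact ⟨hlm, ihB.2.1⟩
  -- lamPi
  · intro Δ Γ l m x A B b hlm _ _ ihA ihb
    refine ⟨?_, by simp [sp], ⟨hlm, ihb.2.2⟩⟩
    intro j k hmj hjk
    have hlj : l < j := lt_of_lt_of_le hlm hmj
    refine Typing.lamPi ?_ ?_ ?_
    · split <;> omega
    · have h := ihA.1 j k (le_of_lt hlj) hjk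
      rwa [if_neg (Nat.ne_of_lt hlj)] at h
    · have h := ihb.1 j k hmj hjk
      rwa [fr_cons_lt hlj] at h
  -- appPi
  · intro Δ Γ l m x A B b a _ _ ihb iha
    have hsp : sp m (Tm.pi l x A B) := ihb.2.2
    have hlm : l < m := hsp.1
    have hB : sp m B := hsp.2
    refine ⟨?_, by simp [sp], sp_subst (sp_mono (le_of_lt hlm) iha.2.1) hB⟩
    intro j k hmj hjk
    have hlj : l < j := lt_of_lt_of_le hlm hmj
    have h2 := iha.1 j k (le_of_lt hlj) hjk
    rw [if_neg (Nat.ne_of_lt hlj)] at h2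
    exact Typing.appPi (ihb.1 j k hmj hjk) h2
  -- arrow
  · intro Δ Γ m A B _ _ ihA ihB
    refine ⟨?_, ihB.2.1, by simp [sp]⟩
    intro j k hmj hjk
    exact Typing.arrow (ihA.1 j k hmj hjk) (ihB.1 j k hmj hjk)
  -- lamArrow
  · intro Δ Γ m x A B b _ _ _ ihA ihB ihb
    refine ⟨?_, by simp [sp], ihB.2.1⟩
    intro j k hmj hjk
    refine Typing.lamArrow (ihA.1 j k hmj hjk) (ihB.1 j k hmj hjk) ?_
    have h := ihb.1 j k hmj hjk
    rwa [fr_cons_le hmj] at h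
  -- appArrow
  · intro Δ Γ m A B b a _ _ ihb iha
    refine ⟨?_, by simp [sp], ihb.2.2⟩
    intro j k hmj hjk
    exact Typing.appArrow (ihb.1 j k hmj hjk) (iha.1 j k hmj hjk)
  -- bot
  · intro Δ Γ m _ ihΓ
    exact ⟨fun j k hmj hjk => Typing.bot (ihΓ.1 j k hjk), by simp [sp], by simp [sp]⟩
  -- absurd
  · intro Δ Γ m b A _ _ ihb ihA
    refine ⟨?_, by simp [sp], ihA.2.1⟩
    intro j k hmj hjk
    exact Typing.absurd (ihb.1 j k hmj hjk) (ihA.1 j k hmj hjk)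
  -- conv
  · intro Δ Γ m a A B _ hdeq _ iha ihB
    refine ⟨?_, iha.2.1, ihB.2.1⟩
    intro j k hmj hjk
    exact Typing.conv (iha.1 j k hmj hjk) hdeq (ihB.1 j k hmj hjk)

/-- **Restricted floating (StraTT)**: if `Δ; Γ ⊢ a :^j A` and `j ≤ k` then
`Δ; ↑_j^k (⌈Γ⌉^j) ⊢ a :^k A`. -/
theorem stratt_restricted_floating {Δ : Sig} {Γ : Ctx} {a A : Tm} {j k : ℕ}
    (h : Typing Δ Γ a j A) (hjk : j ≤ k) :
    Typing Δ (float j k (restrict j Γ)) a k A := by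
  simpa using (float_main h).1 j k le_rfl hjk
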